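/- For the 4-cycle motif (motif 6, the complete bipartite 2×2 motif), the B-EDD occurrence probability equals φ_6 = ρ⁴ (∫_0^1 g(u)² du)² (∫_0^1 h(v)² dv)² = γ_2² λ_2² / ρ⁴, and moreover φ_6 ≥ φ_5² / φ_1² (an instance of the product formula combined with the Cauchy–Schwarz facts ∫g² ≥ 1, ∫h² ≥ 1). -/

import Mathlib

/-!
Conditionally on the node labels `u`, `v`, the edges of the B-EDD graph are independent, the
edge `(i, j)` being present with probability `ρ g(uᵢ) h(vⱼ) ≤ 1`. By Fubini, the probability of a
motif with edge set `S` is therefore `∫∫ ∏_{(i,j) ∈ S} ρ g(uᵢ) h(vⱼ) du dv`. The integrand splits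
into factors depending on a single label, `uᵢ` entering with exponent its degree in `S`, so the
integral is `ρ^|S| ∏ᵢ ∫ g^{deg i} ∏ⱼ ∫ h^{deg j}`. For the 4-cycle this is
`ρ⁴ (∫ g²)² (∫ h²)²`; for the path, using `∫ g = ∫ h = 1`, it is `ρ³ ∫ g² ∫ h²`, so that
`φ₆ ≥ φ₅² / φ₁²` in fact holds with equality.
-/

open MeasureTheory ProbabilityTheory Set
open scoped ENNReal Finset

local notation "𝕌" => (volume.restrict (Icc (0:ℝ) 1) : Measure ℝ)

instance isProbabilityMeasure_volume_restrict_Icc_zero_one : IsProbabilityMeasure 𝕌 :=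
  ⟨by rw [Measure.restrict_apply_univ, Real.volume_Icc, sub_zero, ENNReal.ofReal_one]⟩

lemma volume_restrict_Icc_zero_one_Iic {c : ℝ} (hc : c ≤ 1) : 𝕌 (Iic c) = ENNReal.ofReal c := by
  rw [Measure.restrict_apply measurableSet_Iic, inter_comm, ← Ici_inter_Iic, inter_assoc,
    Iic_inter_Iic, inf_eq_right.2 hc, Ici_inter_Iic, Real.volume_Icc, sub_zero]

lemma pi_volume_restrict_Icc_zero_one_setOf_forall_le {ι : Type*} [Fintype ι] (S : Finset ι)
    {c : ι → ℝ} (hc : ∀ p ∈ S, c p ≤ 1) :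
    Measure.pi (fun _ : ι => 𝕌) {w | ∀ p ∈ S, w p ≤ c p} = ∏ p ∈ S, ENNReal.ofReal (c p) := by
  classical
  have hbox : {w : ι → ℝ | ∀ p ∈ S, w p ≤ c p}
      = univ.pi fun p => if p ∈ S then Iic (c p) else univ := by
    ext w
    simp only [mem_ofPred_eq, mem_pi, mem_univ, forall_const]
    exact forall_congr' fun p => by split_ifs with hp <;> simp [hp]
  rw [hbox, Measure.pi_pi]
  simp only [apply_ite, measure_univ, Finset.prod_ite_mem, Finset.univ_inter]
  exact Finset.prod_congr rfl fun p hp => volume_restrict_Icc_zero_one_Iic (hc p hp)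

lemma ae_pi_forall_mem {ι : Type*} [Fintype ι] {α : ι → Type*} [∀ i, MeasurableSpace (α i)]
    (μ : ∀ i, Measure (α i)) [∀ i, SigmaFinite (μ i)] {s : ∀ i, Set (α i)}
    (hs : ∀ i, ∀ᵐ x ∂μ i, x ∈ s i) : ∀ᵐ u ∂Measure.pi μ, ∀ i, u i ∈ s i :=
  ae_all_iff.2 fun i => (Measure.quasiMeasurePreserving_eval μ i).ae (hs i)

lemma lintegral_fintype_prod_eq_prod {ι : Type*} [Fintype ι] {α : ι → Type*}
    [∀ i, MeasurableSpace (α i)] (μ : ∀ i, Measure (α i)) [∀ i, IsProbabilityMeasure (μ i)]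
    {f : ∀ i, α i → ℝ≥0∞} (hf : ∀ i, Measurable (f i)) :
    ∫⁻ x, ∏ i, f i (x i) ∂Measure.pi μ = ∏ i, ∫⁻ y, f i y ∂μ i := by
  rw [lintegral_prod_eq_prod_lintegral_of_indepFun _ _ (iIndepFun_pi fun i => (hf i).aemeasurable)
    fun i => (hf i).comp (measurable_pi_apply i)]
  exact Finset.prod_congr rfl fun i _ => (measurePreserving_eval μ i).lintegral_comp (hf i)

lemma toReal_lintegral_ofReal_pow {α : Type*} [MeasurableSpace α] {μ : Measure α} {f : α → ℝ}
    (hf0 : ∀ x, 0 ≤ f x) (hf : Measurable f) (k : ℕ) :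
    (∫⁻ x, ENNReal.ofReal (f x) ^ k ∂μ).toReal = ∫ x, f x ^ k ∂μ := by
  have hpow : ∀ x, ENNReal.ofReal (f x) ^ k = ENNReal.ofReal (f x ^ k) :=
    fun x => (ENNReal.ofReal_pow (hf0 x) k).symm
  simp only [hpow]
  exact (integral_eq_lintegral_of_nonneg_ae (ae_of_all _ fun x => pow_nonneg (hf0 x) k)
    (hf.pow_const k).aestronglyMeasurable).symm

theorem Finset.prod_mul_mul_fst_snd {ι κ M : Type*} [Fintype ι] [Fintype κ] [DecidableEq ι]
    [DecidableEq κ] [CommMonoid M] (S : Finset (ι × κ)) (a : M) (b : ι → M) (c : κ → M) :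
    ∏ p ∈ S, a * b p.1 * c p.2
      = a ^ #S * (∏ i, b i ^ #{p ∈ S | p.1 = i}) * ∏ j, c j ^ #{p ∈ S | p.2 = j} := by
  simp only [Finset.prod_mul_distrib, Finset.prod_const, ← Finset.prod_fiberwise' S Prod.fst b,
    ← Finset.prod_fiberwise' S Prod.snd c]

theorem Finset.card_filter_univ_fst_eq {ι κ : Type*} [Fintype ι] [Fintype κ] (i : ι)
    [DecidablePred fun p : ι × κ => p.1 = i] :
    #{p ∈ (univ : Finset (ι × κ)) | p.1 = i} = Fintype.card κ := by
  convert card_product {i} (univ : Finset κ) using 2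
  · ext p; simp [Prod.ext_iff, eq_comm]
  · simp

theorem Finset.card_filter_univ_snd_eq {ι κ : Type*} [Fintype ι] [Fintype κ] (j : κ)
    [DecidablePred fun p : ι × κ => p.2 = j] :
    #{p ∈ (univ : Finset (ι × κ)) | p.2 = j} = Fintype.card ι := by
  convert card_product (univ : Finset ι) {j} using 2
  · ext p; simp [Prod.ext_iff, eq_comm]
  · simp

namespace Motif

variable {ι κ : Type*} [Fintype ι] [Fintype κ]

/-- A sample `ω` consists of the labels `ω.1` of the top nodes `ι`, the labels `ω.2.1` of the
bottom nodes `κ` and one uniform `ω.2.2 (i, j)` per potential edge; the edge `(i, j)` is present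
iff `ω.2.2 (i, j) ≤ W (ω.1 i) (ω.2.1 j)`, and this is the event that all edges of `S` are. -/
def event (W : ℝ → ℝ → ℝ) (S : Finset (ι × κ)) : Set ((ι → ℝ) × (κ → ℝ) × (ι × κ → ℝ)) :=
  {ω | ∀ p ∈ S, ω.2.2 p ≤ W (ω.1 p.1) (ω.2.1 p.2)}

variable (ι κ) in
noncomputable abbrev sampleMeasure : Measure ((ι → ℝ) × (κ → ℝ) × (ι × κ → ℝ)) :=
  (Measure.pi fun _ : ι => 𝕌).prod
    ((Measure.pi fun _ : κ => 𝕌).prod (Measure.pi fun _ : ι × κ => 𝕌))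

lemma measurableSet_event {W : ℝ → ℝ → ℝ} (hW : Measurable (Function.uncurry W))
    (S : Finset (ι × κ)) : MeasurableSet (event W S) := by
  have hedge : ∀ p : ι × κ, Measurable fun ω : (ι → ℝ) × (κ → ℝ) × (ι × κ → ℝ) =>
      W (ω.1 p.1) (ω.2.1 p.2) :=
    fun p => hW.comp (f := fun ω : (ι → ℝ) × (κ → ℝ) × (ι × κ → ℝ) => (ω.1 p.1, ω.2.1 p.2))
      (by fun_prop)
  simp only [event, ofPred_forall]
  exact MeasurableSet.iInter fun p => MeasurableSet.iInter fun _ =>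
    measurableSet_le ((measurable_pi_apply p).comp measurable_snd.snd) (hedge p)

lemma sampleMeasure_event {W : ℝ → ℝ → ℝ} (hW : Measurable (Function.uncurry W))
    (hW1 : ∀ x ∈ Icc (0:ℝ) 1, ∀ y ∈ Icc (0:ℝ) 1, W x y ≤ 1) (S : Finset (ι × κ)) :
    sampleMeasure ι κ (event W S) = ∫⁻ u, ∫⁻ v, ∏ p ∈ S, ENNReal.ofReal (W (u p.1) (v p.2))
      ∂Measure.pi (fun _ : κ => 𝕌) ∂Measure.pi (fun _ : ι => 𝕌) := by
  rw [Measure.prod_apply (measurableSet_event hW S)]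
  refine lintegral_congr_ae ((ae_pi_forall_mem _ fun _ => ae_restrict_mem measurableSet_Icc).mono
    fun u hu => ?_)
  dsimp only
  rw [Measure.prod_apply (measurableSet_event hW S |>.preimage measurable_prodMk_left)]
  refine lintegral_congr_ae ((ae_pi_forall_mem _ fun _ => ae_restrict_mem measurableSet_Icc).mono
    fun v hv => ?_)
  exact pi_volume_restrict_Icc_zero_one_setOf_forall_le S fun p _ => hW1 _ (hu _) _ (hv _)

theorem sampleMeasure_event_mul_mul [DecidableEq ι] [DecidableEq κ] {ρ : ℝ} {g h : ℝ → ℝ}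
    (hρ : 0 ≤ ρ) (hg0 : ∀ x, 0 ≤ g x) (hgm : Measurable g) (hhm : Measurable h)
    (hW1 : ∀ x ∈ Icc (0:ℝ) 1, ∀ y ∈ Icc (0:ℝ) 1, ρ * g x * h y ≤ 1) (S : Finset (ι × κ)) :
    sampleMeasure ι κ (event (fun x y => ρ * g x * h y) S) =
      ENNReal.ofReal ρ ^ #S * (∏ i, ∫⁻ x, ENNReal.ofReal (g x) ^ #{p ∈ S | p.1 = i} ∂𝕌)
        * ∏ j, ∫⁻ y, ENNReal.ofReal (h y) ^ #{p ∈ S | p.2 = j} ∂𝕌 := by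
  have hW : Measurable (Function.uncurry fun x y => ρ * g x * h y) :=
    (measurable_const.mul (hgm.comp measurable_fst)).mul (hhm.comp measurable_snd)
  have hsplit : ∀ x y, ENNReal.ofReal (ρ * g x * h y)
      = ENNReal.ofReal ρ * ENNReal.ofReal (g x) * ENNReal.ofReal (h y) := fun x y => by
    rw [ENNReal.ofReal_mul (mul_nonneg hρ (hg0 x)), ENNReal.ofReal_mul hρ]
  have hG : ∀ k : ℕ, Measurable fun x => ENNReal.ofReal (g x) ^ k := by fun_prop
  have hH : ∀ k : ℕ, Measurable fun y => ENNReal.ofReal (h y) ^ k := by fun_prop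
  rw [sampleMeasure_event hW hW1]
  calc _ = ∫⁻ u, ∫⁻ v, ENNReal.ofReal ρ ^ #S
            * (∏ i, ENNReal.ofReal (g (u i)) ^ #{p ∈ S | p.1 = i})
            * ∏ j, ENNReal.ofReal (h (v j)) ^ #{p ∈ S | p.2 = j}
          ∂Measure.pi (fun _ : κ => 𝕌) ∂Measure.pi (fun _ : ι => 𝕌) := by
        refine lintegral_congr fun u => lintegral_congr fun v => ?_
        simp only [hsplit]
        exact Finset.prod_mul_mul_fst_snd S _ (fun i => ENNReal.ofReal (g (u i)))
          fun j => ENNReal.ofReal (h (v j))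
    _ = ∫⁻ u, ENNReal.ofReal ρ ^ #S * (∏ i, ENNReal.ofReal (g (u i)) ^ #{p ∈ S | p.1 = i})
          * ∏ j, ∫⁻ y, ENNReal.ofReal (h y) ^ #{p ∈ S | p.2 = j} ∂𝕌
          ∂Measure.pi (fun _ : ι => 𝕌) := by
        refine lintegral_congr fun u => ?_
        rw [lintegral_const_mul _ (by fun_prop), lintegral_fintype_prod_eq_prod _ fun _ => hH _]
    _ = _ := by
        rw [lintegral_mul_const _ (by fun_prop), lintegral_const_mul _ (by fun_prop),
          lintegral_fintype_prod_eq_prod _ fun _ => hG _]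

theorem toReal_sampleMeasure_event_mul_mul [DecidableEq ι] [DecidableEq κ] {ρ : ℝ}
    {g h : ℝ → ℝ} (hρ : 0 ≤ ρ) (hg0 : ∀ x, 0 ≤ g x) (hh0 : ∀ y, 0 ≤ h y) (hgm : Measurable g)
    (hhm : Measurable h) (hW1 : ∀ x ∈ Icc (0:ℝ) 1, ∀ y ∈ Icc (0:ℝ) 1, ρ * g x * h y ≤ 1)
    (S : Finset (ι × κ)) :
    (sampleMeasure ι κ (event (fun x y => ρ * g x * h y) S)).toReal =
      ρ ^ #S * (∏ i, ∫ x in Icc (0:ℝ) 1, g x ^ #{p ∈ S | p.1 = i})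
        * ∏ j, ∫ y in Icc (0:ℝ) 1, h y ^ #{p ∈ S | p.2 = j} := by
  rw [sampleMeasure_event_mul_mul hρ hg0 hgm hhm hW1, ENNReal.toReal_mul, ENNReal.toReal_mul,
    ENNReal.toReal_pow, ENNReal.toReal_ofReal hρ, ENNReal.toReal_prod, ENNReal.toReal_prod]
  simp only [toReal_lintegral_ofReal_pow hg0 hgm, toReal_lintegral_ofReal_pow hh0 hhm]

theorem toReal_sampleMeasure_event_univ {ρ : ℝ} {g h : ℝ → ℝ}
    (hρ : 0 ≤ ρ) (hg0 : ∀ x, 0 ≤ g x) (hh0 : ∀ y, 0 ≤ h y) (hgm : Measurable g)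
    (hhm : Measurable h) (hW1 : ∀ x ∈ Icc (0:ℝ) 1, ∀ y ∈ Icc (0:ℝ) 1, ρ * g x * h y ≤ 1) :
    (sampleMeasure ι κ (event (fun x y => ρ * g x * h y) Finset.univ)).toReal =
      ρ ^ (Fintype.card ι * Fintype.card κ)
        * (∫ x in Icc (0:ℝ) 1, g x ^ Fintype.card κ) ^ Fintype.card ι
        * (∫ y in Icc (0:ℝ) 1, h y ^ Fintype.card ι) ^ Fintype.card κ := by
  classical
  rw [toReal_sampleMeasure_event_mul_mul hρ hg0 hh0 hgm hhm hW1, Finset.card_univ,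
    Fintype.card_prod]
  simp only [Finset.card_filter_univ_fst_eq, Finset.card_filter_univ_snd_eq, Finset.prod_const,
    Finset.card_univ]

end Motif

/-- for the 4-cycle motif (motif 6, complete bipartite 2×2),
`φ_6 = ρ⁴ (∫ g²)² (∫ h²)² = γ₂² λ₂² / ρ⁴`, and moreover `φ_6 ≥ φ_5² / φ_1²`
where motif 5 is the path and `φ_1 = ρ` is the edge probability. -/
theorem cycle_motif_probability
    (ρ : ℝ) (g h : ℝ → ℝ)
    (hgm : Measurable g) (hhm : Measurable h)
    (hg0 : ∀ u, 0 ≤ g u) (hh0 : ∀ v, 0 ≤ h v)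
    (hgint : ∫ u in Set.Icc (0:ℝ) 1, g u = 1)
    (hhint : ∫ v in Set.Icc (0:ℝ) 1, h v = 1)
    (hρ : 0 < ρ)
    (hbound : ∀ u ∈ Set.Icc (0:ℝ) 1, ∀ v ∈ Set.Icc (0:ℝ) 1, ρ * g u * h v ≤ 1)
    (μ : Measure ((Fin 2 → ℝ) × (Fin 2 → ℝ) × (Fin 2 × Fin 2 → ℝ)))
    (hμ : μ = (Measure.pi fun _ : Fin 2 => volume.restrict (Set.Icc (0:ℝ) 1)).prod
        ((Measure.pi fun _ : Fin 2 => volume.restrict (Set.Icc (0:ℝ) 1)).prod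
          (Measure.pi fun _ : Fin 2 × Fin 2 => volume.restrict (Set.Icc (0:ℝ) 1))))
    (E6 E5 : Set ((Fin 2 → ℝ) × (Fin 2 → ℝ) × (Fin 2 × Fin 2 → ℝ)))
    (hE6 : E6 = {ω | ∀ i j : Fin 2, ω.2.2 (i, j) ≤ ρ * g (ω.1 i) * h (ω.2.1 j)})
    (hE5 : E5 = {ω | ω.2.2 (0, 0) ≤ ρ * g (ω.1 0) * h (ω.2.1 0)
        ∧ ω.2.2 (0, 1) ≤ ρ * g (ω.1 0) * h (ω.2.1 1)
        ∧ ω.2.2 (1, 1) ≤ ρ * g (ω.1 1) * h (ω.2.1 1)}) :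
    (μ E6).toReal
      = ρ ^ 4 * (∫ u in Set.Icc (0:ℝ) 1, g u ^ 2) ^ 2
          * (∫ v in Set.Icc (0:ℝ) 1, h v ^ 2) ^ 2
    ∧ (μ E5).toReal ^ 2 / ρ ^ 2 ≤ (μ E6).toReal := by
  have hcycle : E6 = Motif.event (fun x y => ρ * g x * h y) Finset.univ := by
    rw [hE6]; ext ω; simp [Motif.event]
  have hpath : E5 = Motif.event (fun x y => ρ * g x * h y) {(0, 0), (0, 1), (1, 1)} := by
    rw [hE5]; ext ω; simp [Motif.event]
  have h6 : (μ E6).toReal = ρ ^ 4 * (∫ u in Icc (0:ℝ) 1, g u ^ 2) ^ 2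
      * (∫ v in Icc (0:ℝ) 1, h v ^ 2) ^ 2 := by
    rw [hμ, hcycle, Motif.toReal_sampleMeasure_event_univ hρ.le hg0 hh0 hgm hhm hbound]
    norm_num
  have h5 : (μ E5).toReal = ρ ^ 3 * (∫ u in Icc (0:ℝ) 1, g u ^ 2)
      * (∫ v in Icc (0:ℝ) 1, h v ^ 2) := by
    rw [hμ, hpath, Motif.toReal_sampleMeasure_event_mul_mul hρ.le hg0 hh0 hgm hhm hbound]
    simp [Fin.prod_univ_two, Finset.filter_insert, Finset.filter_singleton, hgint, hhint]
  refine ⟨h6, le_of_eq ?_⟩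
  rw [h5, h6]
  field_simp
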